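/- If the empirical estimates are uniformly ε-accurate, i.e. |μ̂_i(x) − μ_i(x)| < ε for all arms x and both objectives i ∈ {1,2}, and every arm y ≠ x* has constrained gap Δ(y) > 2ε (where Δ(y) = min{max(τ − μ_2(y), μ_1(x*) − μ_1(y)), μ_2(x*) − τ} and also μ_2(x*) − τ > 2ε), then x* is empirically feasible and ranks first in the ordering that places empirically feasible arms (sorted by decreasing μ̂_1) before empirically infeasible arms. -/
import Mathlib

theorem accurate_estimates_rank_best_feasible_first {X : Type*} [Fintype X]
    (μ₁ μ₂ ν₁ ν₂ : X → ℝ) (τ ε : ℝ) (hε : 0 < ε) (xstar : X)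
    (hfeas : μ₂ xstar ≥ τ)
    (hopt : ∀ x : X, μ₂ x ≥ τ → μ₁ x ≤ μ₁ xstar)
    (hacc₁ : ∀ x : X, |ν₁ x - μ₁ x| < ε)
    (hacc₂ : ∀ x : X, |ν₂ x - μ₂ x| < ε)
    (hslack : μ₂ xstar - τ > 2 * ε)
    (hgap : ∀ y : X, y ≠ xstar →
      min (max (τ - μ₂ y) (μ₁ xstar - μ₁ y)) (μ₂ xstar - τ) > 2 * ε) :
    ν₂ xstar > τ ∧
    ∀ y : X, y ≠ xstar → ν₂ y > τ → ν₁ xstar > ν₁ y := by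
  constructor
  · have := abs_lt.mp (hacc₂ xstar)
    linarith [this.1, this.2]
  · intro y hy hνy
    have hg := hgap y hy
    have h1 := abs_lt.mp (hacc₂ y)
    have h2 := abs_lt.mp (hacc₁ y)
    have h3 := abs_lt.mp (hacc₁ xstar)
    have hmax : max (τ - μ₂ y) (μ₁ xstar - μ₁ y) > 2 * ε := lt_of_lt_of_le hg (min_le_left _ _)
    have : μ₁ xstar - μ₁ y > 2 * ε := by
      rcases le_or_gt (τ - μ₂ y) (μ₁ xstar - μ₁ y) with h | h
      · rwa [max_eq_right h] at hmax
      · rw [max_eq_left h.le] at hmax; linarith [h1.1, h1.2]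
    linarith [h2.1, h2.2, h3.1, h3.2]
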